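/- Let l ≥ 1, θ₁,…,θ_l ∈ ℝ and p₁,…,p_l ∈ ℝ², and g_k = (R(θ_k), p_k). Suppose θ₁ + ⋯ + θ_l ≡ 0 (mod 2π), equivalently R(θ₁+⋯+θ_l) = I. Then for all 1 ≤ i < j ≤ l one has Δ^i = R_{i,j−1} Δ^j, where (R_{i,j−1}, p_{i,j−1}) is the partial product g_i ⋯ g_{j−1}; in particular the Euclidean norms of the cycle displacements agree: ‖Δ^i‖ = ‖Δ^j‖ for all 1 ≤ i, j ≤ l. -/

import Mathlib

/-- The 2×2 rotation matrix `R(θ)`. -/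
noncomputable def Rot (θ : ℝ) : Matrix (Fin 2) (Fin 2) ℝ :=
  !![Real.cos θ, -Real.sin θ; Real.sin θ, Real.cos θ]

/-- An element of `SE(2)`: a pair of a 2×2 matrix (rotation part) and a translation in ℝ². -/
abbrev SE2 : Type := Matrix (Fin 2) (Fin 2) ℝ × (Fin 2 → ℝ)

/-- Group law on `SE(2)`: `(R₁, p₁)·(R₂, p₂) = (R₁R₂, p₁ + R₁p₂)`. -/
noncomputable def se2Mul (g h : SE2) : SE2 := (g.1 * h.1, g.2 + g.1.mulVec h.2)

/-- Identity element of `SE(2)`. -/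
noncomputable def se2One : SE2 := ((1 : Matrix (Fin 2) (Fin 2) ℝ), (0 : Fin 2 → ℝ))

/-- Given angles `θ` and translations `p` (1-indexed), `gSE2 θ p k = (R(θ k), p k)`. -/
noncomputable def gSE2 (θ : ℕ → ℝ) (p : ℕ → Fin 2 → ℝ) (k : ℕ) : SE2 := (Rot (θ k), p k)

/-- Partial product `g_{i,j} = g_i g_{i+1} ⋯ g_j` (the identity when `j < i`). -/
noncomputable def partialProd (θ : ℕ → ℝ) (p : ℕ → Fin 2 → ℝ) (i j : ℕ) : SE2 :=
  ((List.range (j + 1 - i)).map (fun t => gSE2 θ p (i + t))).foldr se2Mul se2One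

/-- Cyclic product `g^i = g_i g_{i+1} ⋯ g_l g_1 ⋯ g_{i-1}`. -/
noncomputable def cycProd (θ : ℕ → ℝ) (p : ℕ → Fin 2 → ℝ) (l i : ℕ) : SE2 :=
  se2Mul (partialProd θ p i l) (partialProd θ p 1 (i - 1))

/-!
Write `g^i = A (B C)` with `A = g_{i,j-1}`, `B = g_{j,l}`, `C = g_{1,i-1}`; then `g^j = B (C A)`
is the conjugate `A⁻¹ g^i A`. Rotations commute, so the rotation part of every cyclic product is
`R(θ₁ + ⋯ + θ_l) = I`, and for a conjugate of a pure translation the translation is simply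
rotated: `Δ^i = R_A Δ^j`. Rotations are isometries, whence `‖Δ^i‖ = ‖Δ^j‖`.
-/

open Finset Matrix

theorem se2Mul_assoc (a b c : SE2) : se2Mul (se2Mul a b) c = se2Mul a (se2Mul b c) := by
  simp only [se2Mul, Matrix.mul_assoc, mulVec_add, mulVec_mulVec, add_assoc]

theorem se2One_se2Mul (a : SE2) : se2Mul se2One a = a := by
  simp [se2Mul, se2One]

theorem foldr_se2Mul_append (L₁ L₂ : List SE2) :
    (L₁ ++ L₂).foldr se2Mul se2One =
      se2Mul (L₁.foldr se2Mul se2One) (L₂.foldr se2Mul se2One) := by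
  induction L₁ with
  | nil => simp [se2One_se2Mul]
  | cons a L ih => simp [ih, se2Mul_assoc]

theorem snd_se2Mul_rotate {a b c : SE2} (h : a.1 * (b.1 * c.1) = 1) :
    (se2Mul a (se2Mul b c)).2 = a.1 *ᵥ (se2Mul b (se2Mul c a)).2 := by
  simp only [se2Mul, mulVec_add, mulVec_mulVec, ← Matrix.mul_assoc]
  rw [Matrix.mul_assoc, h, one_mulVec]
  abel

theorem Rot_zero : Rot 0 = 1 := by
  ext i j
  fin_cases i <;> fin_cases j <;> simp [Rot]

theorem Rot_add (a b : ℝ) : Rot (a + b) = Rot a * Rot b := by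
  ext i j
  fin_cases i <;> fin_cases j <;>
    simp [Rot, Matrix.mul_apply, Real.cos_add, Real.sin_add] <;> ring

theorem norm_Rot_mulVec (a : ℝ) (v : Fin 2 → ℝ) :
    ‖(WithLp.equiv 2 (Fin 2 → ℝ)).symm (Rot a *ᵥ v)‖ =
      ‖(WithLp.equiv 2 (Fin 2 → ℝ)).symm v‖ := by
  have norm_eq (w : Fin 2 → ℝ) :
      ‖(WithLp.equiv 2 (Fin 2 → ℝ)).symm w‖ = √(w 0 ^ 2 + w 1 ^ 2) := by
    simp [EuclideanSpace.norm_eq, Fin.sum_univ_two]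
  rw [norm_eq, norm_eq]
  congr 1
  simp [Rot, mulVec, dotProduct, Fin.sum_univ_two]
  linear_combination (v 0 ^ 2 + v 1 ^ 2) * Real.sin_sq_add_cos_sq a

section Products

variable (θ : ℕ → ℝ) (p : ℕ → Fin 2 → ℝ)

theorem partialProd_mul {i m j : ℕ} (him : i ≤ m + 1) (hmj : m ≤ j) :
    se2Mul (partialProd θ p i m) (partialProd θ p (m + 1) j) = partialProd θ p i j := by
  unfold partialProd
  rw [show j + 1 - i = (m + 1 - i) + (j + 1 - (m + 1)) by omega, List.range_add,
    List.map_append, foldr_se2Mul_append, List.map_map]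
  congr 3
  funext t
  simp only [Function.comp_apply]
  congr 1
  omega

theorem partialProd_fst (i j : ℕ) :
    (partialProd θ p i j).1 = Rot (∑ k ∈ Ico i (j + 1), θ k) := by
  rw [partialProd, sum_Ico_eq_sum_range]
  induction j + 1 - i with
  | zero => simp [se2One, Rot_zero]
  | succ n ih =>
    rw [List.range_succ, List.map_append, foldr_se2Mul_append, sum_range_succ, Rot_add, ← ih]
    simp [se2Mul, se2One, gSE2]

theorem cycProd_fst {l i : ℕ} (hi : 1 ≤ i) (hil : i ≤ l + 1) :
    (cycProd θ p l i).1 = Rot (∑ k ∈ Icc 1 l, θ k) := by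
  rw [cycProd, se2Mul, partialProd_fst, partialProd_fst, ← Rot_add, add_comm,
    Nat.sub_add_cancel hi, sum_Ico_consecutive _ hi hil, Ico_add_one_right_eq_Icc]

theorem cycProd_snd_eq_mulVec {l : ℕ} (hrot : Rot (∑ k ∈ Icc 1 l, θ k) = 1) {i j : ℕ}
    (hi : 1 ≤ i) (hij : i ≤ j) (hjl : j ≤ l + 1) :
    (cycProd θ p l i).2 = (partialProd θ p i (j - 1)).1 *ᵥ (cycProd θ p l j).2 := by
  set A := partialProd θ p i (j - 1)
  set B := partialProd θ p j l
  set C := partialProd θ p 1 (i - 1)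
  have hcyc_i : cycProd θ p l i = se2Mul A (se2Mul B C) := by
    rw [← se2Mul_assoc, cycProd, ← partialProd_mul θ p (m := j - 1) (by omega) (by omega),
      Nat.sub_add_cancel (by omega)]
  have hcyc_j : cycProd θ p l j = se2Mul B (se2Mul C A) := by
    rw [cycProd, ← partialProd_mul θ p (i := 1) (m := i - 1) (j := j - 1) (by omega) (by omega),
      Nat.sub_add_cancel hi]
  have hrot_i : A.1 * (B.1 * C.1) = 1 := by
    rw [← hrot, ← cycProd_fst θ p hi (by omega), hcyc_i]
    rfl
  rw [hcyc_i, hcyc_j, snd_se2Mul_rotate hrot_i]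

theorem norm_cycProd_snd_eq {l : ℕ} (hrot : Rot (∑ k ∈ Icc 1 l, θ k) = 1) {i j : ℕ}
    (hi : 1 ≤ i) (hil : i ≤ l) (hj : 1 ≤ j) (hjl : j ≤ l) :
    ‖(WithLp.equiv 2 (Fin 2 → ℝ)).symm (cycProd θ p l i).2‖ =
      ‖(WithLp.equiv 2 (Fin 2 → ℝ)).symm (cycProd θ p l j).2‖ := by
  wlog hij : i ≤ j generalizing i j
  · exact (this hj hjl hi hil (by omega)).symm
  rw [cycProd_snd_eq_mulVec θ p hrot hi hij (by omega), partialProd_fst, norm_Rot_mulVec]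

end Products

theorem translation_gait_invariance_general (l : ℕ) (θ : ℕ → ℝ) (p : ℕ → Fin 2 → ℝ)
    (hrot : Rot (∑ k ∈ Finset.Icc 1 l, θ k) = 1) :
    (∀ i j, 1 ≤ i → i < j → j ≤ l →
      (cycProd θ p l i).2 = (partialProd θ p i (j - 1)).1.mulVec (cycProd θ p l j).2) ∧
    (∀ i j, 1 ≤ i → i ≤ l → 1 ≤ j → j ≤ l →
      ‖(WithLp.equiv 2 (Fin 2 → ℝ)).symm (cycProd θ p l i).2‖ =
        ‖(WithLp.equiv 2 (Fin 2 → ℝ)).symm (cycProd θ p l j).2‖) :=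
  ⟨fun _ _ hi hij hjl => cycProd_snd_eq_mulVec θ p hrot hi hij.le (by omega),
    fun _ _ hi hil hj hjl => norm_cycProd_snd_eq θ p hrot hi hil hj hjl⟩

/-- if `θ₁ + ⋯ + θ_l ≡ 0 (mod 2π)`, equivalently `R(θ₁+⋯+θ_l) = I`, then
`Δ^i = R_{i,j−1} Δ^j` for all `1 ≤ i < j ≤ l`; in particular the Euclidean norms of
the cycle displacements agree. -/
theorem translation_gait_invariance (l : ℕ) (hl : 1 ≤ l) (θ : ℕ → ℝ) (p : ℕ → Fin 2 → ℝ)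
    (hrot : Rot (∑ k ∈ Finset.Icc 1 l, θ k) = 1) :
    (∀ i j, 1 ≤ i → i < j → j ≤ l →
      (cycProd θ p l i).2 = (partialProd θ p i (j - 1)).1.mulVec (cycProd θ p l j).2) ∧
    (∀ i j, 1 ≤ i → i ≤ l → 1 ≤ j → j ≤ l →
      ‖(WithLp.equiv 2 (Fin 2 → ℝ)).symm (cycProd θ p l i).2‖ =
        ‖(WithLp.equiv 2 (Fin 2 → ℝ)).symm (cycProd θ p l j).2‖) :=
  translation_gait_invariance_general l θ p hrot
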